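/- Let R be a commutative ring, let P be an n×n matrix with entries in the polynomial ring R[X], and let A be an n×n matrix of natural numbers such that the degree of P(i,j) is at most A(i,j) for all i,j (degree taken in WithBot ℕ, so the zero polynomial has degree ⊥ and the condition holds automatically for it). Then the degree of det P is at most J(A), the maximum over all permutations σ of Fin n of Σ_i A(i,σ(i)). -/
import Mathlib


/-- The Jacobi number of a square matrix of naturals: the maximum over all
permutations `σ` of the transversal sums `∑ i, A i (σ i)`. -/
def jacobiNumber {n : ℕ} (A : Matrix (Fin n) (Fin n) ℕ) : ℕ :=
  Finset.univ.sup fun σ : Equiv.Perm (Fin n) => ∑ i, A i (σ i)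

/-- if `deg (P i j) ≤ A i j` for all `i j`, then
`deg (det P) ≤ J(A)`. -/
theorem degree_det_le_jacobiNumber {R : Type*} [CommRing R] (n : ℕ)
    (P : Matrix (Fin n) (Fin n) (Polynomial R)) (A : Matrix (Fin n) (Fin n) ℕ)
    (hdeg : ∀ i j, (P i j).degree ≤ (A i j : WithBot ℕ)) :
    P.det.degree ≤ (jacobiNumber A : WithBot ℕ) := by
  rw [Matrix.det_apply]
  refine (Polynomial.degree_sum_le _ _).trans ?_
  refine Finset.sup_le fun σ _ => ?_
  have hsmul : (Equiv.Perm.sign σ • ∏ i, P (σ i) i).degree = (∏ i, P (σ i) i).degree := by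
    rcases Int.units_eq_one_or (Equiv.Perm.sign σ) with h | h <;> rw [h] <;> simp
  rw [hsmul]
  refine (Polynomial.degree_prod_le _ _).trans ?_
  calc ∑ i, (P (σ i) i).degree ≤ ∑ i, ((A (σ i) i : ℕ) : WithBot ℕ) :=
        Finset.sum_le_sum fun i _ => hdeg _ _
    _ = ((∑ i, A (σ i) i : ℕ) : WithBot ℕ) := by push_cast; rfl
    _ ≤ _ := by
        have : ∑ i, A (σ i) i = ∑ i, A i (σ⁻¹ i) :=
          (Equiv.sum_comp σ⁻¹ fun i => A (σ i) i).symm.trans (by simp)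
        rw [this]
        exact_mod_cast Finset.le_sup (f := fun τ : Equiv.Perm (Fin n) => ∑ i, A i (τ i))
          (Finset.mem_univ σ⁻¹)
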